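/- Let f1 : [0,1/2] → ℝ and f2 : [1/2,1] → ℝ be increasing, continuously differentiable functions such that t·f1′(t) = (1−t)·f2′(1−t) for all t ∈ [0,1/2] and f1(0) = f2(1/2) = 0, and let Q, R : [0,1] → ℝ be nonnegative functions. Define A : [0,1]×[0,1] → ℝ by A(t1,t2) := Q(t2)·f1(t1) + R(t2) if t1 ∈ [0,1/2], and A(t1,t2) := Q(t2)·f1(1/2) + R(t2) + Q(1−t2)·f2(t1) if t1 ∈ (1/2,1]. Then the symmetric mechanism described by A is strategyproof: for all b1, b2, t1 ∈ [0,1], û^A(b1,b2) ≥ b1·A(t1,b2) + (1−b1)·A(1−t1,1−b2). -/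

import Mathlib

/-- The family of strategyproof partial mechanisms built from `f1, f2, Q, R`:
`A(t1,t2) = Q(t2)·f1(t1) + R(t2)` for `t1 ∈ [0,1/2]`, and
`A(t1,t2) = A(1/2,t2) + Q(1−t2)·f2(t1)` for `t1 ∈ (1/2,1]`. -/
noncomputable def mechA (f1 f2 Q R : ℝ → ℝ) (t1 t2 : ℝ) : ℝ :=
  if t1 ≤ 1/2 then Q t2 * f1 t1 + R t2
  else Q t2 * f1 (1/2) + R t2 + Q (1 - t2) * f2 t1

open Set Filter Topology


/-- Derivative of a function monotone on `Icc a b` is nonneg at interior points. -/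
lemma mechA_aux_deriv_nonneg {f : ℝ → ℝ} {a b x d : ℝ}
    (hmono : MonotoneOn f (Icc a b)) (hx : x ∈ Ioo a b)
    (hd : HasDerivAt f d x) : 0 ≤ d := by
  have hsub : 𝓝[>] x ≤ 𝓝[≠] x := by
    apply nhdsWithin_mono
    intro y hy
    simp only [Set.mem_compl_iff, Set.mem_singleton_iff]
    exact ne_of_gt hy
  have hslope : Tendsto (slope f x) (𝓝[>] x) (𝓝 d) :=
    (hasDerivAt_iff_tendsto_slope.1 hd).mono_left hsub
  refine ge_of_tendsto hslope ?_
  filter_upwards [Ioo_mem_nhdsGT_of_mem ⟨le_refl x, hx.2⟩] with y hy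
  have hxy : f x ≤ f y :=
    hmono ⟨hx.1.le, hx.2.le⟩ ⟨(hx.1.trans hy.1).le, hy.2.le⟩ hy.1.le
  have : 0 < y - x := sub_pos.2 hy.1
  rw [slope_def_field]
  exact div_nonneg (sub_nonneg.2 hxy) this.le

/-- Key analytic lemma: `t ↦ c·f1(t) + (1−c)·f2(1−t)` on `[0,1/2]` is maximized
at `min c (1/2)`. -/
lemma mechA_aux_gmax (f1 f2 f1' f2' : ℝ → ℝ)
    (hf1mono : MonotoneOn f1 (Icc (0 : ℝ) (1/2)))
    (hf1deriv : ∀ t ∈ Icc (0 : ℝ) (1/2),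
      HasDerivWithinAt f1 (f1' t) (Icc (0 : ℝ) (1/2)) t)
    (hf2deriv : ∀ t ∈ Icc (1/2 : ℝ) 1,
      HasDerivWithinAt f2 (f2' t) (Icc (1/2 : ℝ) 1) t)
    (hrel : ∀ t ∈ Icc (0 : ℝ) (1/2), t * f1' t = (1 - t) * f2' (1 - t))
    {c : ℝ} (hc : c ∈ Icc (0 : ℝ) 1) :
    ∀ t ∈ Icc (0 : ℝ) (1/2),
      c * f1 t + (1 - c) * f2 (1 - t) ≤
        c * f1 (min c (1/2)) + (1 - c) * f2 (1 - min c (1/2)) := by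
  set g : ℝ → ℝ := fun t => c * f1 t + (1 - c) * f2 (1 - t) with hg_def
  set m : ℝ := min c (1/2) with hm_def
  have hm0 : 0 ≤ m := le_min hc.1 (by norm_num)
  have hmhalf : m ≤ 1/2 := min_le_right _ _
  -- derivative of g within Icc 0 (1/2)
  have hgderiv : ∀ t ∈ Icc (0 : ℝ) (1/2),
      HasDerivWithinAt g (c * f1' t - (1 - c) * f2' (1 - t)) (Icc (0 : ℝ) (1/2)) t := by
    intro t ht
    have h1 : (1 : ℝ) - t ∈ Icc (1/2 : ℝ) 1 := ⟨by linarith [ht.2], by linarith [ht.1]⟩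
    have hmaps : MapsTo (fun s : ℝ => 1 - s) (Icc (0 : ℝ) (1/2)) (Icc (1/2 : ℝ) 1) := by
      intro s hs
      simp only [mem_Icc]
      constructor <;> [linarith [hs.2]; linarith [hs.1]]
    have hinner : HasDerivWithinAt (fun s : ℝ => 1 - s) (-1) (Icc (0 : ℝ) (1/2)) t :=
      (hasDerivWithinAt_id t _).const_sub 1
    have hcomp : HasDerivWithinAt (fun s : ℝ => f2 (1 - s)) (f2' (1 - t) * (-1))
        (Icc (0 : ℝ) (1/2)) t :=
      HasDerivWithinAt.comp t (hf2deriv _ h1) hinner hmaps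
    have := ((hf1deriv t ht).const_mul c).add (hcomp.const_mul (1 - c))
    convert this using 1
    · rfl
    · rfl
    · rfl
    · ring
  have hgcont : ContinuousOn g (Icc (0 : ℝ) (1/2)) :=
    fun t ht => (hgderiv t ht).continuousWithinAt
  -- sign of the derivative at interior points
  have hsign : ∀ x ∈ Ioo (0 : ℝ) (1/2),
      c * f1' x - (1 - c) * f2' (1 - x) = f1' x * (c - x) / (1 - x) := by
    intro x hx
    have hx1 : (1 : ℝ) - x ≠ 0 := by linarith [hx.2]
    have hr := hrel x ⟨hx.1.le, hx.2.le⟩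
    field_simp
    linear_combination (1 - c) * hr
  have hf1'nonneg : ∀ x ∈ Ioo (0 : ℝ) (1/2), 0 ≤ f1' x := by
    intro x hx
    have hmem : Icc (0 : ℝ) (1/2) ∈ 𝓝 x := Icc_mem_nhds hx.1 hx.2
    exact mechA_aux_deriv_nonneg hf1mono hx ((hf1deriv x ⟨hx.1.le, hx.2.le⟩).hasDerivAt hmem)
  -- g has derivative within interior sets too
  have hmono : MonotoneOn g (Icc 0 m) := by
    apply monotoneOn_of_hasDerivWithinAt_nonneg (f' := fun x => c * f1' x - (1 - c) * f2' (1 - x))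
      (convex_Icc 0 m) (hgcont.mono (Icc_subset_Icc le_rfl hmhalf))
    · intro x hx
      rw [interior_Icc] at hx
      have hx' : x ∈ Icc (0 : ℝ) (1/2) := ⟨hx.1.le, hx.2.le.trans hmhalf⟩
      exact (hgderiv x hx').mono (by rw [interior_Icc]; exact (Ioo_subset_Icc_self).trans (Icc_subset_Icc le_rfl hmhalf))
    · intro x hx
      rw [interior_Icc] at hx
      have hxo : x ∈ Ioo (0 : ℝ) (1/2) := ⟨hx.1, lt_of_lt_of_le hx.2 hmhalf⟩
      rw [hsign x hxo]
      have h1 : 0 < 1 - x := by linarith [hxo.2]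
      have h2 : 0 ≤ c - x := by
        have : x < c := lt_of_lt_of_le hx.2 (min_le_left _ _)
        linarith
      exact div_nonneg (mul_nonneg (hf1'nonneg x hxo) h2) h1.le
  have hanti : AntitoneOn g (Icc m (1/2)) := by
    apply antitoneOn_of_hasDerivWithinAt_nonpos (f' := fun x => c * f1' x - (1 - c) * f2' (1 - x))
      (convex_Icc m (1/2)) (hgcont.mono (Icc_subset_Icc hm0 le_rfl))
    · intro x hx
      rw [interior_Icc] at hx
      have hx' : x ∈ Icc (0 : ℝ) (1/2) := ⟨hm0.trans hx.1.le, hx.2.le⟩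
      exact (hgderiv x hx').mono (by rw [interior_Icc]; exact (Ioo_subset_Icc_self).trans (Icc_subset_Icc hm0 le_rfl))
    · intro x hx
      rw [interior_Icc] at hx
      have hxo : x ∈ Ioo (0 : ℝ) (1/2) := ⟨lt_of_le_of_lt hm0 hx.1, hx.2⟩
      rw [hsign x hxo]
      have h1 : 0 < 1 - x := by linarith [hxo.2]
      have h2 : c - x ≤ 0 := by
        have h1x : min c (1/2) < x := hx.1
        rcases le_total c (1/2) with h | h
        · rw [min_eq_left h] at h1x; linarith
        · rw [min_eq_right h] at h1x; linarith [hxo.2]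
      exact div_nonpos_of_nonpos_of_nonneg
        (mul_nonpos_of_nonneg_of_nonpos (hf1'nonneg x hxo) h2) h1.le
  intro t ht
  have hmmem : m ∈ Icc (0 : ℝ) (1/2) := ⟨hm0, hmhalf⟩
  rcases le_total t m with hle | hge
  · exact hmono ⟨ht.1, hle⟩ ⟨hm0, le_rfl⟩ hle
  · exact hanti ⟨le_rfl, hmhalf⟩ ⟨hge, ht.2⟩ hge

lemma mechA_eval_left (f1 f2 Q R : ℝ → ℝ) {t1 : ℝ} (t2 : ℝ) (h : t1 ≤ 1/2) :
    mechA f1 f2 Q R t1 t2 = Q t2 * f1 t1 + R t2 := if_pos h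

lemma mechA_eval_right (f1 f2 Q R : ℝ → ℝ) (hf2half : f2 (1/2) = 0) {t1 : ℝ} (t2 : ℝ)
    (h : 1/2 ≤ t1) :
    mechA f1 f2 Q R t1 t2 = Q t2 * f1 (1/2) + R t2 + Q (1 - t2) * f2 t1 := by
  unfold mechA
  split_ifs with h'
  · have ht : t1 = 1/2 := le_antisymm h' h
    rw [ht, hf2half]; ring
  · rfl


/-- If `f1 : [0,1/2] → ℝ` and `f2 : [1/2,1] → ℝ` are increasing, continuously
differentiable functions (with derivatives `f1'`, `f2'`) such that
`t·f1′(t) = (1−t)·f2′(1−t)` for all `t ∈ [0,1/2]` and `f1(0) = f2(1/2) = 0`, and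
`Q, R : [0,1] → ℝ` are nonnegative, then the symmetric two-item mechanism described by
`A := mechA f1 f2 Q R` is strategyproof. -/
theorem mechA_strategyproof (f1 f2 f1' f2' Q R : ℝ → ℝ)
    (hf1mono : MonotoneOn f1 (Set.Icc (0 : ℝ) (1/2)))
    (hf2mono : MonotoneOn f2 (Set.Icc (1/2 : ℝ) 1))
    (hf1deriv : ∀ t ∈ Set.Icc (0 : ℝ) (1/2),
      HasDerivWithinAt f1 (f1' t) (Set.Icc (0 : ℝ) (1/2)) t)
    (hf2deriv : ∀ t ∈ Set.Icc (1/2 : ℝ) 1,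
      HasDerivWithinAt f2 (f2' t) (Set.Icc (1/2 : ℝ) 1) t)
    (hf1derivCont : ContinuousOn f1' (Set.Icc (0 : ℝ) (1/2)))
    (hf2derivCont : ContinuousOn f2' (Set.Icc (1/2 : ℝ) 1))
    (hrel : ∀ t ∈ Set.Icc (0 : ℝ) (1/2), t * f1' t = (1 - t) * f2' (1 - t))
    (hf10 : f1 0 = 0) (hf2half : f2 (1/2) = 0)
    (hQ : ∀ t ∈ Set.Icc (0 : ℝ) 1, 0 ≤ Q t)
    (hR : ∀ t ∈ Set.Icc (0 : ℝ) 1, 0 ≤ R t) :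
    ∀ b1 ∈ Set.Icc (0 : ℝ) 1, ∀ b2 ∈ Set.Icc (0 : ℝ) 1, ∀ t1 ∈ Set.Icc (0 : ℝ) 1,
      b1 * mechA f1 f2 Q R b1 b2 + (1 - b1) * mechA f1 f2 Q R (1 - b1) (1 - b2) ≥
        b1 * mechA f1 f2 Q R t1 b2 + (1 - b1) * mechA f1 f2 Q R (1 - t1) (1 - b2) := by
  intro b1 hb1 b2 hb2 t1 ht1
  have hQ2 : 0 ≤ Q b2 := hQ b2 hb2
  have hQ2' : 0 ≤ Q (1 - b2) := hQ _ ⟨by linarith [hb2.2], by linarith [hb2.1]⟩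
  -- uniform representations of the utility on each half
  set C : ℝ := b1 * R b2 + (1 - b1) * (Q (1 - b2) * f1 (1/2) + R (1 - b2)) with hC
  set C' : ℝ := b1 * (Q b2 * f1 (1/2) + R b2) + (1 - b1) * R (1 - b2) with hC'
  have hUleft : ∀ t : ℝ, t ≤ 1/2 →
      b1 * mechA f1 f2 Q R t b2 + (1 - b1) * mechA f1 f2 Q R (1 - t) (1 - b2)
        = C + Q b2 * (b1 * f1 t + (1 - b1) * f2 (1 - t)) := by
    intro t ht
    rw [mechA_eval_left f1 f2 Q R b2 ht,
      mechA_eval_right f1 f2 Q R hf2half (1 - b2) (by linarith)]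
    have hb2eq : (1 : ℝ) - (1 - b2) = b2 := by ring
    rw [hb2eq, hC]; ring
  have hUright : ∀ t : ℝ, 1/2 ≤ t →
      b1 * mechA f1 f2 Q R t b2 + (1 - b1) * mechA f1 f2 Q R (1 - t) (1 - b2)
        = C' + Q (1 - b2) * (b1 * f2 t + (1 - b1) * f1 (1 - t)) := by
    intro t ht
    rw [mechA_eval_right f1 f2 Q R hf2half b2 ht,
      mechA_eval_left f1 f2 Q R (1 - b2) (by linarith)]
    rw [hC']; ring
  have key1 := mechA_aux_gmax f1 f2 f1' f2' hf1mono hf1deriv hf2deriv hrel hb1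
  have hb1' : (1 : ℝ) - b1 ∈ Set.Icc (0 : ℝ) 1 := ⟨by linarith [hb1.2], by linarith [hb1.1]⟩
  have key2 := mechA_aux_gmax f1 f2 f1' f2' hf1mono hf1deriv hf2deriv hrel hb1'
  rcases le_total b1 (1/2) with hb | hb
  · -- b1 ≤ 1/2
    have hmin1 : min b1 (1/2) = b1 := min_eq_left hb
    rw [hmin1] at key1
    have hmin2 : min (1 - b1) (1/2) = 1/2 := min_eq_right (by linarith)
    rw [hmin2] at key2
    rcases le_total t1 (1/2) with ht | ht
    · rw [hUleft b1 hb, hUleft t1 ht]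
      have := key1 t1 ⟨ht1.1, ht⟩
      nlinarith [hQ2]
    · rw [hUleft b1 hb, hUright t1 ht]
      have h1t1 : (1 : ℝ) - t1 ∈ Set.Icc (0 : ℝ) (1/2) := ⟨by linarith [ht1.2], by linarith⟩
      have hk2 := key2 (1 - t1) h1t1
      rw [show (1 : ℝ) - (1 - t1) = t1 by ring, show (1 : ℝ) - (1 - b1) = b1 by ring,
        show (1 : ℝ) - 1/2 = 1/2 by norm_num, hf2half] at hk2
      -- hk2 : (1-b1)*f1(1-t1) + b1*f2 t1 ≤ (1-b1)*f1(1/2) + b1*0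
      have hk1 := key1 (1/2) ⟨by norm_num, le_rfl⟩
      rw [show (1 : ℝ) - 1/2 = 1/2 by norm_num, hf2half] at hk1
      -- hk1 : b1*f1(1/2) + (1-b1)*0 ≤ b1*f1 b1 + (1-b1)*f2(1-b1)
      -- chain through U(1/2)
      have hmid := hUleft (1/2) le_rfl
      have hmid' := hUright (1/2) le_rfl
      rw [show (1 : ℝ) - 1/2 = 1/2 by norm_num, hf2half] at hmid hmid'
      have heq := hmid.symm.trans hmid'
      have s1 : b1 * f2 t1 + (1 - b1) * f1 (1 - t1) ≤ b1 * 0 + (1 - b1) * f1 (1/2) := by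
        linarith [hk2]
      rw [ge_iff_le]
      calc C' + Q (1 - b2) * (b1 * f2 t1 + (1 - b1) * f1 (1 - t1))
          ≤ C' + Q (1 - b2) * (b1 * 0 + (1 - b1) * f1 (1/2)) :=
            add_le_add_right (mul_le_mul_of_nonneg_left s1 hQ2') C'
        _ = C + Q b2 * (b1 * f1 (1/2) + (1 - b1) * 0) := heq.symm
        _ ≤ C + Q b2 * (b1 * f1 b1 + (1 - b1) * f2 (1 - b1)) :=
            add_le_add_right (mul_le_mul_of_nonneg_left hk1 hQ2) C
  · -- b1 ≥ 1/2
    have hmin1 : min b1 (1/2) = 1/2 := min_eq_right hb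
    rw [hmin1] at key1
    have hmin2 : min (1 - b1) (1/2) = 1 - b1 := min_eq_left (by linarith)
    rw [hmin2] at key2
    rcases le_total t1 (1/2) with ht | ht
    · rw [hUright b1 hb, hUleft t1 ht]
      have hk1 := key1 t1 ⟨ht1.1, ht⟩
      rw [show (1 : ℝ) - 1/2 = 1/2 by norm_num, hf2half] at hk1
      have hk2 := key2 (1/2) ⟨by norm_num, le_rfl⟩
      rw [show (1 : ℝ) - (1 - b1) = b1 by ring, show (1 : ℝ) - 1/2 = 1/2 by norm_num,
        hf2half] at hk2
      have hmid := hUleft (1/2) le_rfl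
      have hmid' := hUright (1/2) le_rfl
      rw [show (1 : ℝ) - 1/2 = 1/2 by norm_num, hf2half] at hmid hmid'
      have heq := hmid.symm.trans hmid'
      have s2 : b1 * 0 + (1 - b1) * f1 (1/2) ≤ b1 * f2 b1 + (1 - b1) * f1 (1 - b1) := by
        linarith [hk2]
      rw [ge_iff_le]
      calc C + Q b2 * (b1 * f1 t1 + (1 - b1) * f2 (1 - t1))
          ≤ C + Q b2 * (b1 * f1 (1/2) + (1 - b1) * 0) :=
            add_le_add_right (mul_le_mul_of_nonneg_left hk1 hQ2) C
        _ = C' + Q (1 - b2) * (b1 * 0 + (1 - b1) * f1 (1/2)) := heq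
        _ ≤ C' + Q (1 - b2) * (b1 * f2 b1 + (1 - b1) * f1 (1 - b1)) :=
            add_le_add_right (mul_le_mul_of_nonneg_left s2 hQ2') C'
    · rw [hUright b1 hb, hUright t1 ht]
      have h1t1 : (1 : ℝ) - t1 ∈ Set.Icc (0 : ℝ) (1/2) := ⟨by linarith [ht1.2], by linarith⟩
      have hk2 := key2 (1 - t1) h1t1
      rw [show (1 : ℝ) - (1 - t1) = t1 by ring, show (1 : ℝ) - (1 - b1) = b1 by ring] at hk2
      nlinarith [hQ2']
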